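/- arXiv:1202.2023 — 4 statements merged into one kernel-verified Lean document; each statement's English description precedes it below -/
import Mathlib

section
/- For all positive integers n, the total number of 231-patterns in all 132-avoiding permutations of length n equals the total number of 312-patterns in all 132-avoiding permutations of length n. -/
/-- `f` picks out an occurrence of the pattern `q` in the permutation `p`. -/
def IsOcc {n k : ℕ} (q : Fin k → ℕ) (p : Equiv.Perm (Fin n)) (f : Fin k → Fin n) : Prop :=
  StrictMono f ∧ ∀ a b : Fin k, q a < q b ↔ (p (f a) : ℕ) < (p (f b) : ℕ)

def ContainsPat {n k : ℕ} (q : Fin k → ℕ) (p : Equiv.Perm (Fin n)) : Prop :=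
  ∃ f, IsOcc q p f

/-- `p` avoids the pattern 132. -/
def Avoids132 {n : ℕ} (p : Equiv.Perm (Fin n)) : Prop :=
  ¬ ContainsPat (![1, 3, 2] : Fin 3 → ℕ) p

/-- The number of occurrences of the pattern `q` in the permutation `p`. -/
noncomputable def occCnt {n k : ℕ} (q : Fin k → ℕ) (p : Equiv.Perm (Fin n)) : ℕ :=
  Nat.card {f : Fin k → Fin n // IsOcc q p f}

open scoped Classical in
/-- The total number of occurrences of the pattern `q` in all
132-avoiding permutations of length `n`. -/
noncomputable def S132 (n : ℕ) {k : ℕ} (q : Fin k → ℕ) : ℕ :=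
  ∑ p ∈ Finset.univ.filter (fun p : Equiv.Perm (Fin n) => Avoids132 p), occCnt q p


/-!
Inversion `p ↦ p⁻¹` maps occurrences of a pattern `q` in `p` bijectively onto occurrences of the
inverse pattern `q⁻¹` in `p⁻¹` (an occurrence at positions `f` becomes one at the values `p ∘ f`).
Since `132` is an involution and `231⁻¹ = 312`, inversion preserves the set of 132-avoiding
permutations and exchanges the 231- and 312-occurrences.
-/

open Equiv

section PatternInverse

variable {n k : ℕ} {q₁ q₂ : Fin k → ℕ} {e : Perm (Fin k)}

/-- `q₂` is the inverse of the pattern `q₁`, witnessed by `e`: the positions `e 0, e 1, …` list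
those of `q₁` by increasing value, and `q₂` has the relative order of `e`. -/
def PatternInverse (q₁ q₂ : Fin k → ℕ) (e : Perm (Fin k)) : Prop :=
  (∀ a b, q₁ (e a) < q₁ (e b) ↔ a < b) ∧ ∀ a b, q₂ a < q₂ b ↔ e a < e b

theorem PatternInverse.symm (h : PatternInverse q₁ q₂ e) : PatternInverse q₂ q₁ e⁻¹ :=
  ⟨fun a b => by simpa using h.2 (e⁻¹ a) (e⁻¹ b), fun a b => by simpa using h.1 (e⁻¹ a) (e⁻¹ b)⟩

theorem PatternInverse.isOcc_inv
    (h : PatternInverse q₁ q₂ e) {p : Perm (Fin n)} {f : Fin k → Fin n} (hf : IsOcc q₁ p f) :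
    IsOcc q₂ p⁻¹ (p ∘ f ∘ e) := by
  refine ⟨fun a b hab => (hf.2 (e a) (e b)).mp ((h.1 a b).mpr hab), fun a b => ?_⟩
  simp only [Function.comp_apply, Perm.coe_inv, symm_apply_apply]
  rw [h.2, ← Fin.lt_def, hf.1.lt_iff_lt]

def PatternInverse.occEquiv (h : PatternInverse q₁ q₂ e) (p : Perm (Fin n)) :
    {f : Fin k → Fin n // IsOcc q₁ p f} ≃ {g : Fin k → Fin n // IsOcc q₂ p⁻¹ g} where
  toFun f := ⟨⇑p ∘ f.1 ∘ ⇑e, h.isOcc_inv f.2⟩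
  invFun g := ⟨⇑p⁻¹ ∘ g.1 ∘ ⇑e⁻¹, by simpa using h.symm.isOcc_inv g.2⟩
  left_inv f := by ext x; simp
  right_inv g := by ext x; simp

theorem PatternInverse.occCnt_eq (h : PatternInverse q₁ q₂ e) (p : Perm (Fin n)) :
    occCnt q₁ p = occCnt q₂ p⁻¹ :=
  Nat.card_congr (h.occEquiv p)

theorem PatternInverse.containsPat_inv
    (h : PatternInverse q₁ q₂ e) {p : Perm (Fin n)} (hp : ContainsPat q₁ p) :
    ContainsPat q₂ p⁻¹ :=
  hp.elim fun _ hf => ⟨_, h.isOcc_inv hf⟩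

theorem patternInverse_132 :
    PatternInverse (![1, 3, 2] : Fin 3 → ℕ) ![1, 3, 2] (swap 1 2) :=
  ⟨by decide, by decide⟩

theorem avoids132_inv (p : Perm (Fin n)) : Avoids132 p⁻¹ ↔ Avoids132 p := by
  refine not_congr ⟨fun hp => ?_, patternInverse_132.containsPat_inv⟩
  simpa using patternInverse_132.containsPat_inv hp

theorem PatternInverse.S132_eq (h : PatternInverse q₁ q₂ e) (n : ℕ) : S132 n q₁ = S132 n q₂ := by
  classical
  unfold S132
  rw [Finset.sum_congr rfl fun p _ => h.occCnt_eq p]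
  exact Finset.sum_equiv (Equiv.inv _) (by simp [avoids132_inv]) fun _ _ => rfl

end PatternInverse

theorem stmt_0 : ∀ n : ℕ, 0 < n →
    S132 n (![2, 3, 1] : Fin 3 → ℕ) = S132 n (![3, 1, 2] : Fin 3 → ℕ) := by
  have h : PatternInverse (![2, 3, 1] : Fin 3 → ℕ) ![3, 1, 2] (finRotate 3).symm :=
    ⟨by decide, by decide⟩
  exact fun n _ => h.S132_eq n
end

section
/- For n ≥ 3, the total number a_n of 213-patterns in all 132-avoiding permutations of length n satisfies the recurrence a_n = Σ_{i=1}^{n} a_{i-1} c_{n-i} + Σ_{i=1}^{n} c_{i-1} a_{n-i} + Σ_{i=3}^{n} d_{i-1} c_{n-i}, where c_m is the m-th Catalan number and d_m is the total number of inversions in all 132-avoiding permutations of length m. -/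
/-- `a n`: total number of 213-patterns in all 132-avoiding permutations of length `n`. -/
noncomputable def aSeq (n : ℕ) : ℕ := S132 n (![2, 1, 3] : Fin 3 → ℕ)

/-- `d m`: total number of inversions in all 132-avoiding permutations of length `m`. -/
noncomputable def dSeq (m : ℕ) : ℕ := S132 m (![2, 1] : Fin 2 → ℕ)

-- ### pattern characterizations

open Equiv Finset

lemma strictMono3 {n : ℕ} (f : Fin 3 → Fin n) :
    StrictMono f ↔ f 0 < f 1 ∧ f 1 < f 2 := by
  constructor
  · intro h; exact ⟨h (by decide), h (by decide)⟩
  · rintro ⟨h1, h2⟩ a b hab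
    fin_cases a <;> fin_cases b <;> simp_all <;> first
      | exact h1.trans h2
      | (exfalso; exact absurd hab (by decide))

lemma isOcc132_iff {n : ℕ} (p : Perm (Fin n)) (f : Fin 3 → Fin n) :
    IsOcc ![1, 3, 2] p f ↔
      f 0 < f 1 ∧ f 1 < f 2 ∧ (p (f 0) : ℕ) < p (f 2) ∧ (p (f 2) : ℕ) < p (f 1) := by
  unfold IsOcc
  rw [strictMono3]
  constructor
  · rintro ⟨⟨h1, h2⟩, hv⟩
    exact ⟨h1, h2, (hv 0 2).1 (by decide), (hv 2 1).1 (by decide)⟩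
  · rintro ⟨h1, h2, h3, h4⟩
    refine ⟨⟨h1, h2⟩, ?_⟩
    intro a b
    fin_cases a <;> fin_cases b <;> simp <;> omega

lemma isOcc213_iff {n : ℕ} (p : Perm (Fin n)) (f : Fin 3 → Fin n) :
    IsOcc ![2, 1, 3] p f ↔
      f 0 < f 1 ∧ f 1 < f 2 ∧ (p (f 1) : ℕ) < p (f 0) ∧ (p (f 0) : ℕ) < p (f 2) := by
  unfold IsOcc
  rw [strictMono3]
  constructor
  · rintro ⟨⟨h1, h2⟩, hv⟩
    exact ⟨h1, h2, (hv 1 0).1 (by decide), (hv 0 2).1 (by decide)⟩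
  · rintro ⟨h1, h2, h3, h4⟩
    refine ⟨⟨h1, h2⟩, ?_⟩
    intro a b
    fin_cases a <;> fin_cases b <;> simp <;> omega

lemma strictMono2 {n : ℕ} (f : Fin 2 → Fin n) :
    StrictMono f ↔ f 0 < f 1 := by
  constructor
  · intro h; exact h (by decide)
  · intro h1 a b hab
    fin_cases a <;> fin_cases b <;> simp_all <;> exact absurd hab (by decide)

lemma isOcc21_iff {n : ℕ} (p : Perm (Fin n)) (f : Fin 2 → Fin n) :
    IsOcc ![2, 1] p f ↔ f 0 < f 1 ∧ (p (f 1) : ℕ) < p (f 0) := by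
  unfold IsOcc
  rw [strictMono2]
  constructor
  · rintro ⟨h1, hv⟩
    exact ⟨h1, (hv 1 0).1 (by decide)⟩
  · rintro ⟨h1, h3⟩
    refine ⟨h1, ?_⟩
    intro a b
    fin_cases a <;> fin_cases b <;> simp <;> omega

-- ### the glue construction

/-- Glue `q` (on the top `t` values, placed first), the maximum, and `r`
(on the bottom `s` values, placed last). -/
def glue {t s : ℕ} (q : Perm (Fin t)) (r : Perm (Fin s)) : Perm (Fin (t + 1 + s)) where
  toFun j :=
    if h : (j : ℕ) < t then ⟨s + q ⟨j, h⟩, by have := (q ⟨j, h⟩).isLt; omega⟩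
    else if h2 : (j : ℕ) < t + 1 then ⟨s + t, by omega⟩
    else ⟨r ⟨(j : ℕ) - (t + 1), by have := j.isLt; omega⟩, by
      have := (r ⟨(j : ℕ) - (t + 1), by have := j.isLt; omega⟩).isLt; omega⟩
  invFun v :=
    if h : (v : ℕ) < s then ⟨t + 1 + r.symm ⟨v, h⟩, by have := (r.symm ⟨v, h⟩).isLt; omega⟩
    else if h2 : (v : ℕ) < s + t then
      ⟨q.symm ⟨(v : ℕ) - s, by have := v.isLt; omega⟩, by
        have := (q.symm ⟨(v : ℕ) - s, by have := v.isLt; omega⟩).isLt; omega⟩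
    else ⟨t, by omega⟩
  left_inv := by
    intro j
    by_cases h : (j : ℕ) < t
    · have hq := (q ⟨j, h⟩).isLt
      simp only [h, dif_pos]
      rw [dif_neg (by omega), dif_pos (by omega)]
      apply Fin.ext
      have : (⟨s + (q ⟨j, h⟩ : ℕ) - s, by omega⟩ : Fin t) = q ⟨j, h⟩ := by
        apply Fin.ext; simp
      simp only [this, Equiv.symm_apply_apply]
    · by_cases h2 : (j : ℕ) < t + 1
      · simp only [h, dif_neg, not_false_iff, h2, dif_pos]
        rw [dif_neg (by omega), dif_neg (by omega)]
        apply Fin.ext; simp; omega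
      · have hj := j.isLt
        have hr := (r ⟨(j : ℕ) - (t + 1), by omega⟩).isLt
        simp only [h, dif_neg, not_false_iff, h2]
        rw [dif_pos (by exact hr)]
        apply Fin.ext
        simp only [Fin.eta, Equiv.symm_apply_apply]
        omega
  right_inv := by
    intro v
    by_cases h : (v : ℕ) < s
    · have hr := (r.symm ⟨v, h⟩).isLt
      simp only [h, dif_pos]
      rw [dif_neg (by omega), dif_neg (by omega)]
      apply Fin.ext
      have : (⟨t + 1 + (r.symm ⟨v, h⟩ : ℕ) - (t + 1), by omega⟩ : Fin s) = r.symm ⟨v, h⟩ := by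
        apply Fin.ext; simp
      simp only [this, Equiv.apply_symm_apply]
    · by_cases h2 : (v : ℕ) < s + t
      · have hq := (q.symm ⟨(v : ℕ) - s, by have := v.isLt; omega⟩).isLt
        simp only [h, dif_neg, not_false_iff, h2, dif_pos]
        rw [dif_pos (by exact hq)]
        apply Fin.ext
        simp only [Fin.eta, Equiv.apply_symm_apply]
        omega
      · have hv := v.isLt
        simp only [h, dif_neg, not_false_iff, h2]
        rw [dif_neg (by omega), dif_pos (by omega)]
        apply Fin.ext; simp; omega

lemma glue_apply_left {t s : ℕ} (q : Perm (Fin t)) (r : Perm (Fin s)) (j : Fin (t + 1 + s))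
    (h : (j : ℕ) < t) : (glue q r j : ℕ) = s + q ⟨j, h⟩ := by
  show ((if h : (j : ℕ) < t then _ else _ : Fin (t+1+s)) : ℕ) = _
  rw [dif_pos h]

lemma glue_apply_mid {t s : ℕ} (q : Perm (Fin t)) (r : Perm (Fin s)) (j : Fin (t + 1 + s))
    (h : (j : ℕ) = t) : (glue q r j : ℕ) = s + t := by
  show ((if _ : (j : ℕ) < t then _ else _ : Fin (t+1+s)) : ℕ) = _
  rw [dif_neg (by omega), dif_pos (by omega)]

lemma glue_apply_right {t s : ℕ} (q : Perm (Fin t)) (r : Perm (Fin s)) (j : Fin (t + 1 + s))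
    (h : t < (j : ℕ)) : (glue q r j : ℕ) = r ⟨(j : ℕ) - (t + 1), by have := j.isLt; omega⟩ := by
  show ((if _ : (j : ℕ) < t then _ else _ : Fin (t+1+s)) : ℕ) = _
  rw [dif_neg (by omega), dif_neg (by omega)]

-- ### 132-avoidance transfers across glue

lemma avoids132_glue_iff {t s : ℕ} (q : Perm (Fin t)) (r : Perm (Fin s)) :
    Avoids132 (glue q r) ↔ Avoids132 q ∧ Avoids132 r := by
  constructor
  · intro h
    constructor
    · rintro ⟨g, hg⟩
      rw [isOcc132_iff] at hg
      refine h ⟨fun i => ⟨g i, by have := (g i).isLt; omega⟩, ?_⟩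
      rw [isOcc132_iff]
      have hv : ∀ i : Fin 3,
          ((glue q r) ⟨(g i : ℕ), by have := (g i).isLt; omega⟩ : ℕ) = s + q (g i) := by
        intro i
        rw [glue_apply_left q r _ (by exact (g i).isLt)]
      simp only [Fin.lt_def] at hg ⊢
      rw [hv 0, hv 1, hv 2]
      refine ⟨hg.1, hg.2.1, by omega⟩
    · rintro ⟨g, hg⟩
      rw [isOcc132_iff] at hg
      refine h ⟨fun i => ⟨t + 1 + g i, by have := (g i).isLt; omega⟩, ?_⟩
      rw [isOcc132_iff]
      have hv : ∀ i : Fin 3,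
          ((glue q r) ⟨t + 1 + (g i : ℕ), by have := (g i).isLt; omega⟩ : ℕ) = r (g i) := by
        intro i
        rw [glue_apply_right q r _ (by simp; omega)]
        congr 1
        apply Fin.ext
        simp
      simp only [Fin.lt_def] at hg ⊢
      rw [hv 0, hv 1, hv 2]
      refine ⟨by omega, by omega, hg.2.2⟩
  · rintro ⟨hq, hr⟩ ⟨f, hf⟩
    rw [isOcc132_iff] at hf
    obtain ⟨h1, h2, h3, h4⟩ := hf
    simp only [Fin.lt_def] at h1 h2
    have hlt : ∀ i : Fin 3, (glue q r (f i) : ℕ) < t + 1 + s := fun i => (glue q r (f i)).isLt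
    rcases lt_trichotomy ((f 2 : ℕ)) t with hc | hc | hc
    · -- all three positions in the left block
      have e0 : (glue q r (f 0) : ℕ) = s + q ⟨f 0, by omega⟩ := glue_apply_left q r _ (by omega)
      have e1 : (glue q r (f 1) : ℕ) = s + q ⟨f 1, by omega⟩ := glue_apply_left q r _ (by omega)
      have e2 : (glue q r (f 2) : ℕ) = s + q ⟨f 2, by omega⟩ := glue_apply_left q r _ (by omega)
      refine hq ⟨![⟨f 0, by omega⟩, ⟨f 1, by omega⟩, ⟨f 2, by omega⟩], ?_⟩
      rw [isOcc132_iff]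
      simp only [Fin.lt_def, Matrix.cons_val_zero, Matrix.cons_val_one, Matrix.head_cons,
        Matrix.cons_val_two, Matrix.tail_cons]
      omega
    · -- f 2 is the max position : impossible since max is largest
      have e2 : (glue q r (f 2) : ℕ) = s + t := glue_apply_mid q r _ hc
      have := hlt 1
      omega
    · -- t < f 2 : show all three in the right block
      have e2 : (glue q r (f 2) : ℕ) = r ⟨(f 2 : ℕ) - (t + 1), by have := (f 2).isLt; omega⟩ :=
        glue_apply_right q r _ hc
      have hv2 : (glue q r (f 2) : ℕ) < s := by rw [e2]; exact (r _).isLt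
      have hf0 : t < (f 0 : ℕ) := by
        rcases lt_trichotomy ((f 0 : ℕ)) t with hc0 | hc0 | hc0
        · have e0 : (glue q r (f 0) : ℕ) = s + q ⟨f 0, by omega⟩ := glue_apply_left q r _ hc0
          omega
        · have e0 : (glue q r (f 0) : ℕ) = s + t := glue_apply_mid q r _ hc0
          omega
        · exact hc0
      have e0 : (glue q r (f 0) : ℕ) = r ⟨(f 0 : ℕ) - (t + 1), by have := (f 0).isLt; omega⟩ :=
        glue_apply_right q r _ hf0
      have e1 : (glue q r (f 1) : ℕ) = r ⟨(f 1 : ℕ) - (t + 1), by have := (f 1).isLt; omega⟩ :=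
        glue_apply_right q r _ (by omega)
      refine hr ⟨![⟨(f 0 : ℕ) - (t + 1), by have := (f 0).isLt; omega⟩,
        ⟨(f 1 : ℕ) - (t + 1), by have := (f 1).isLt; omega⟩,
        ⟨(f 2 : ℕ) - (t + 1), by have := (f 2).isLt; omega⟩], ?_⟩
      rw [isOcc132_iff]
      simp only [Fin.lt_def, Matrix.cons_val_zero, Matrix.cons_val_one, Matrix.head_cons,
        Matrix.cons_val_two, Matrix.tail_cons]
      omega

-- ### counting 213-occurrences in a glued permutation

def embL (t s : ℕ) {k : ℕ} (g : Fin k → Fin t) : Fin k → Fin (t + 1 + s) :=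
  fun i => ⟨g i, by have := (g i).isLt; omega⟩

def embR (t s : ℕ) {k : ℕ} (g : Fin k → Fin s) : Fin k → Fin (t + 1 + s) :=
  fun i => ⟨t + 1 + g i, by have := (g i).isLt; omega⟩

def embM (t s : ℕ) (g : Fin 2 → Fin t) : Fin 3 → Fin (t + 1 + s) :=
  ![⟨g 0, by have := (g 0).isLt; omega⟩, ⟨g 1, by have := (g 1).isLt; omega⟩, ⟨t, by omega⟩]

open scoped Classical in
lemma occCnt_eq_card {n k : ℕ} (pat : Fin k → ℕ) (p : Perm (Fin n)) :
    occCnt pat p = (Finset.univ.filter (fun f => IsOcc pat p f)).card := by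
  rw [occCnt, Nat.card_eq_fintype_card]
  convert Fintype.card_subtype _

open scoped Classical in
lemma occCnt213_glue {t s : ℕ} (q : Perm (Fin t)) (r : Perm (Fin s)) :
    occCnt ![2, 1, 3] (glue q r) =
      occCnt ![2, 1, 3] q + occCnt ![2, 1, 3] r + occCnt ![2, 1] q := by
  classical
  rw [occCnt_eq_card, occCnt_eq_card, occCnt_eq_card, occCnt_eq_card]
  have hsetL : ∀ (g : Fin 3 → Fin t), IsOcc ![2,1,3] q g →
      IsOcc ![2,1,3] (glue q r) (embL t s g) := by
    intro g hg
    rw [isOcc213_iff] at hg ⊢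
    have hv : ∀ i : Fin 3, ((glue q r) (embL t s g i) : ℕ) = s + q (g i) := by
      intro i
      rw [show embL t s g i = ⟨(g i : ℕ), by have := (g i).isLt; omega⟩ from rfl]
      rw [glue_apply_left q r _ (by exact (g i).isLt)]
    simp only [Fin.lt_def] at hg ⊢
    rw [hv 0, hv 1, hv 2]
    exact ⟨hg.1, hg.2.1, by omega⟩
  have hsetR : ∀ (g : Fin 3 → Fin s), IsOcc ![2,1,3] r g →
      IsOcc ![2,1,3] (glue q r) (embR t s g) := by
    intro g hg
    rw [isOcc213_iff] at hg ⊢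
    have hv : ∀ i : Fin 3, ((glue q r) (embR t s g i) : ℕ) = r (g i) := by
      intro i
      rw [show embR t s g i = ⟨t + 1 + (g i : ℕ), by have := (g i).isLt; omega⟩ from rfl]
      rw [glue_apply_right q r _ (by simp; omega)]
      congr 1
      apply Fin.ext
      simp
    simp only [Fin.lt_def] at hg ⊢
    rw [hv 0, hv 1, hv 2]
    exact ⟨by simp [embR]; omega, by simp [embR]; omega, by omega⟩
  have hsetM : ∀ (g : Fin 2 → Fin t), IsOcc ![2,1] q g →
      IsOcc ![2,1,3] (glue q r) (embM t s g) := by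
    intro g hg
    rw [isOcc21_iff] at hg
    rw [isOcc213_iff]
    have hv0 : ((glue q r) (embM t s g 0) : ℕ) = s + q (g 0) := by
      rw [show embM t s g 0 = ⟨(g 0 : ℕ), by have := (g 0).isLt; omega⟩ from rfl]
      rw [glue_apply_left q r _ (by exact (g 0).isLt)]
    have hv1 : ((glue q r) (embM t s g 1) : ℕ) = s + q (g 1) := by
      rw [show embM t s g 1 = ⟨(g 1 : ℕ), by have := (g 1).isLt; omega⟩ from rfl]
      rw [glue_apply_left q r _ (by exact (g 1).isLt)]
    have hv2 : ((glue q r) (embM t s g 2) : ℕ) = s + t := by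
      rw [show embM t s g 2 = ⟨t, by omega⟩ from rfl]
      rw [glue_apply_mid q r _ rfl]
    simp only [Fin.lt_def] at hg ⊢
    rw [hv0, hv1, hv2]
    have h0 := (g 0).isLt
    have h1 := (g 1).isLt
    have hq0 := (q (g 0)).isLt
    refine ⟨?_, ?_, by omega, by omega⟩
    · show ((embM t s g 0 : Fin (t+1+s)) : ℕ) < ((embM t s g 1 : Fin (t+1+s)) : ℕ)
      simp only [embM, Matrix.cons_val_zero, Matrix.cons_val_one, Matrix.head_cons]
      exact hg.1
    · show ((embM t s g 1 : Fin (t+1+s)) : ℕ) < ((embM t s g 2 : Fin (t+1+s)) : ℕ)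
      simp only [embM, Matrix.cons_val_one, Matrix.head_cons, Matrix.cons_val_two,
        Matrix.tail_cons]
      exact h1
  have injL : Function.Injective (embL t s (k := 3)) := by
    intro a b h
    funext i
    have h2 := congrFun h i
    simpa [embL, Fin.ext_iff] using h2
  have injR : Function.Injective (embR t s (k := 3)) := by
    intro a b h
    funext i
    have h2 := congrFun h i
    simpa [embR, Fin.ext_iff] using h2
  have injM : Function.Injective (embM t s) := by
    intro a b h
    have h0 := congrFun h 0
    have h1 := congrFun h 1
    simp only [embM, Matrix.cons_val_zero, Matrix.cons_val_one, Matrix.head_cons,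
      Fin.mk.injEq] at h0 h1
    funext i
    fin_cases i
    · exact Fin.ext h0
    · exact Fin.ext h1
  have memL2 : ∀ g : Fin 3 → Fin t, (embL t s g 2 : ℕ) < t := fun g => (g 2).isLt
  have memR0 : ∀ g : Fin 3 → Fin s, t < (embR t s g 2 : ℕ) := fun g => by
    simp [embR]; omega
  have memM2 : ∀ g : Fin 2 → Fin t, (embM t s g 2 : ℕ) = t := fun g => rfl
  have main : (Finset.univ.filter (fun f => IsOcc ![2,1,3] (glue q r) f)) =
      ((Finset.univ.filter (fun g => IsOcc ![2,1,3] q g)).image (embL t s) ∪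
       (Finset.univ.filter (fun g => IsOcc ![2,1,3] r g)).image (embR t s)) ∪
      (Finset.univ.filter (fun g => IsOcc ![2,1] q g)).image (embM t s) := by
    ext f
    simp only [Finset.mem_filter, Finset.mem_univ, true_and, Finset.mem_union, Finset.mem_image]
    constructor
    · intro hf
      rw [isOcc213_iff] at hf
      obtain ⟨h1, h2, h3, h4⟩ := hf
      simp only [Fin.lt_def] at h1 h2
      rcases lt_trichotomy ((f 2 : ℕ)) t with hc | hc | hc
      · left; left
        have hb : ∀ i : Fin 3, (f i : ℕ) < t := by
          intro i
          fin_cases i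
          · show (f 0 : ℕ) < t; omega
          · show (f 1 : ℕ) < t; omega
          · show (f 2 : ℕ) < t; omega
        refine ⟨fun i => ⟨f i, hb i⟩, ?_, by funext i; apply Fin.ext; rfl⟩
        rw [isOcc213_iff]
        have e0 : (glue q r (f 0) : ℕ) = s + q ⟨f 0, hb 0⟩ := glue_apply_left q r _ (hb 0)
        have e1 : (glue q r (f 1) : ℕ) = s + q ⟨f 1, hb 1⟩ := glue_apply_left q r _ (hb 1)
        have e2 : (glue q r (f 2) : ℕ) = s + q ⟨f 2, hb 2⟩ := glue_apply_left q r _ (hb 2)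
        simp only [Fin.lt_def]
        refine ⟨h1, h2, by omega, by omega⟩
      · right
        have hb : (f 0 : ℕ) < t ∧ (f 1 : ℕ) < t := by omega
        refine ⟨![⟨f 0, hb.1⟩, ⟨f 1, hb.2⟩], ?_, ?_⟩
        · rw [isOcc21_iff]
          have e0 : (glue q r (f 0) : ℕ) = s + q ⟨f 0, hb.1⟩ := glue_apply_left q r _ hb.1
          have e1 : (glue q r (f 1) : ℕ) = s + q ⟨f 1, hb.2⟩ := glue_apply_left q r _ hb.2
          simp only [Fin.lt_def, Matrix.cons_val_zero, Matrix.cons_val_one, Matrix.head_cons]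
          refine ⟨h1, by omega⟩
        · funext i
          fin_cases i
          · apply Fin.ext; rfl
          · apply Fin.ext; rfl
          · apply Fin.ext
            show (t : ℕ) = ((f 2 : Fin (t+1+s)) : ℕ)
            omega
      · left; right
        have hv2 : (glue q r (f 2) : ℕ) < s := by
          rw [glue_apply_right q r _ hc]; exact (r _).isLt
        have hf0 : t < (f 0 : ℕ) := by
          rcases lt_trichotomy ((f 0 : ℕ)) t with hc0 | hc0 | hc0
          · have e0 : (glue q r (f 0) : ℕ) = s + q ⟨f 0, hc0⟩ := glue_apply_left q r _ hc0
            omega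
          · have e0 : (glue q r (f 0) : ℕ) = s + t := glue_apply_mid q r _ hc0
            omega
          · exact hc0
        have hb : ∀ i : Fin 3, t < (f i : ℕ) := by
          intro i
          fin_cases i
          · show t < (f 0 : ℕ); omega
          · show t < (f 1 : ℕ); omega
          · show t < (f 2 : ℕ); omega
        have hb2 : ∀ i : Fin 3, (f i : ℕ) - (t + 1) < s := by
          intro i; have := (f i).isLt; omega
        refine ⟨fun i => ⟨(f i : ℕ) - (t + 1), hb2 i⟩, ?_, ?_⟩
        · rw [isOcc213_iff]
          have e0 : (glue q r (f 0) : ℕ) = r ⟨(f 0 : ℕ) - (t+1), hb2 0⟩ := by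
            rw [glue_apply_right q r _ (hb 0)]
          have e1 : (glue q r (f 1) : ℕ) = r ⟨(f 1 : ℕ) - (t+1), hb2 1⟩ := by
            rw [glue_apply_right q r _ (hb 1)]
          have e2 : (glue q r (f 2) : ℕ) = r ⟨(f 2 : ℕ) - (t+1), hb2 2⟩ := by
            rw [glue_apply_right q r _ (hb 2)]
          simp only [Fin.lt_def]
          refine ⟨by have := hb 0; have := hb 1; omega,
            by have := hb 1; have := hb 2; omega, by omega, by omega⟩
        · funext i
          apply Fin.ext
          show t + 1 + ((f i : ℕ) - (t + 1)) = (f i : ℕ)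
          have := hb i; omega
    · rintro ((⟨g, hg, rfl⟩ | ⟨g, hg, rfl⟩) | ⟨g, hg, rfl⟩)
      · exact hsetL g hg
      · exact hsetR g hg
      · exact hsetM g hg
  rw [main]
  rw [Finset.card_union_of_disjoint, Finset.card_union_of_disjoint,
    Finset.card_image_of_injective _ injL, Finset.card_image_of_injective _ injR,
    Finset.card_image_of_injective _ injM]
  · rw [Finset.disjoint_left]
    intro f hfL hfR
    obtain ⟨g, _, rfl⟩ := Finset.mem_image.mp hfL
    obtain ⟨g', _, h'⟩ := Finset.mem_image.mp hfR
    have h1 := memL2 g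
    have h2 : (embR t s g' 2 : ℕ) = (embL t s g 2 : ℕ) := by rw [h']
    have h3 := memR0 g'
    omega
  · rw [Finset.disjoint_left]
    intro f hfLR hfM
    obtain ⟨g', _, h'⟩ := Finset.mem_image.mp hfM
    have h2 : (embM t s g' 2 : ℕ) = t := memM2 g'
    rw [h'] at h2
    rcases Finset.mem_union.mp hfLR with hf | hf
    · obtain ⟨g, _, rfl⟩ := Finset.mem_image.mp hf
      have := memL2 g; omega
    · obtain ⟨g, _, rfl⟩ := Finset.mem_image.mp hf
      have := memR0 g; omega

-- ### extraction : every 132-avoider with max at position t is a glue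

set_option maxHeartbeats 1600000 in
lemma glue_surj {t s : ℕ} (P : Perm (Fin (t + 1 + s))) (hA : Avoids132 P)
    (hmax : (P ⟨t, by omega⟩ : ℕ) = s + t) :
    ∃ (q : Perm (Fin t)) (r : Perm (Fin s)), P = glue q r := by
  have hlt : ∀ x : Fin (t + 1 + s), (P x : ℕ) < t + 1 + s := fun x => (P x).isLt
  have hinj : ∀ x y : Fin (t + 1 + s), (P x : ℕ) = (P y : ℕ) → x = y := by
    intro x y h
    exact P.injective (Fin.ext h)
  -- step 1 : values left of the max exceed values right of the max
  have step1 : ∀ j k : Fin (t + 1 + s), (j : ℕ) < t → t < (k : ℕ) → (P k : ℕ) < (P j : ℕ) := by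
    intro j k hj hk
    by_contra hcon
    push_neg at hcon
    have hne : (P j : ℕ) ≠ (P k : ℕ) := fun h => by
      have := hinj j k h; subst this; omega
    have hkt : (P k : ℕ) < s + t := by
      have h1 : (P k : ℕ) ≠ s + t := fun h => by
        have := hinj k ⟨t, by omega⟩ (h.trans hmax.symm)
        rw [Fin.ext_iff] at this; simp at this; omega
      have := hlt k; omega
    refine hA ⟨![j, ⟨t, by omega⟩, k], ?_⟩
    rw [isOcc132_iff]
    simp only [Fin.lt_def, Matrix.cons_val_zero, Matrix.cons_val_one, Matrix.head_cons,
      Matrix.cons_val_two, Matrix.tail_cons]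
    refine ⟨by omega, by omega, by omega, by rw [hmax]; omega⟩
  -- step 2 : values left of the max are at least s
  have step2 : ∀ j : Fin (t + 1 + s), (j : ℕ) < t → s ≤ (P j : ℕ) := by
    intro j hj
    by_contra hcon
    push_neg at hcon
    set T : Finset (Fin (t + 1 + s)) := insert j (Finset.Ioi ⟨t, by omega⟩) with hT
    have hjnot : j ∉ Finset.Ioi (⟨t, by omega⟩ : Fin (t + 1 + s)) := by
      simp [Finset.mem_Ioi, Fin.lt_def]; omega
    have hcardT : T.card = 1 + s := by
      rw [hT, Finset.card_insert_of_notMem hjnot]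
      simp [Fin.card_Ioi]
      omega
    have hsub : T.image P ⊆ Finset.Iio (⟨s, by omega⟩ : Fin (t + 1 + s)) := by
      intro y hy
      obtain ⟨x, hx, rfl⟩ := Finset.mem_image.mp hy
      rw [Finset.mem_Iio, Fin.lt_def]
      rcases Finset.mem_insert.mp hx with rfl | hx
      · exact hcon
      · rw [Finset.mem_Ioi, Fin.lt_def] at hx
        have := step1 j x hj hx
        simp at hx ⊢
        omega
    have hcard2 : (T.image P).card = T.card := Finset.card_image_of_injective T P.injective
    have := Finset.card_le_card hsub
    rw [hcard2, hcardT] at this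
    simp at this
  -- step 3 : values right of the max are less than s
  have hmax' : ∀ h : t < t + 1 + s, (P ⟨t, h⟩ : ℕ) = s + t := fun _ => hmax
  have step3 : ∀ k : Fin (t + 1 + s), t < (k : ℕ) → (P k : ℕ) < s := by
    intro k hk
    by_contra hcon
    push_neg at hcon
    obtain ⟨tp, htp⟩ : ∃ tp : Fin (t + 1 + s), (tp : ℕ) = t := ⟨⟨t, by omega⟩, rfl⟩
    obtain ⟨sp, hsp⟩ : ∃ sp : Fin (t + 1 + s), (sp : ℕ) = s := ⟨⟨s, by omega⟩, rfl⟩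
    have hmaxtp : (P tp : ℕ) = s + t := by
      have : tp = ⟨t, by omega⟩ := Fin.ext htp
      rw [this]
      exact hmax' _
    have hknot : k ∉ Finset.Iic tp := by
      simp only [Finset.mem_Iic, Fin.le_def, htp]
      omega
    have hcardT : (insert k (Finset.Iic tp)).card = t + 2 := by
      rw [Finset.card_insert_of_notMem hknot]
      simp [Fin.card_Iic, htp]
    have hsub : (insert k (Finset.Iic tp)).image P ⊆ Finset.Ici sp := by
      intro y hy
      obtain ⟨x, hx, rfl⟩ := Finset.mem_image.mp hy
      rw [Finset.mem_Ici, Fin.le_def, hsp]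
      rcases Finset.mem_insert.mp hx with rfl | hx
      · exact hcon
      · rw [Finset.mem_Iic, Fin.le_def, htp] at hx
        rcases eq_or_lt_of_le hx with heq | hlt2
        · have hxe : x = tp := Fin.ext (heq.trans htp.symm)
          rw [hxe, hmaxtp]
          omega
        · exact step2 x hlt2
    have hle := Finset.card_le_card hsub
    rw [Finset.card_image_of_injective _ P.injective, hcardT] at hle
    have hci : (Finset.Ici sp).card = t + 1 + s - s := by
      simp [Fin.card_Ici, hsp]
    rw [hci] at hle
    omega
  -- bounds for left values
  have hleft : ∀ j : Fin (t + 1 + s), (j : ℕ) < t → (P j : ℕ) < s + t := by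
    intro j hj
    have h1 : (P j : ℕ) ≠ s + t := fun h => by
      have := hinj j ⟨t, by omega⟩ (h.trans hmax.symm)
      rw [Fin.ext_iff] at this; simp at this; omega
    have := hlt j; omega
  -- construct q
  obtain ⟨q, hqv⟩ : ∃ q : Perm (Fin t), ∀ j : Fin t,
      (q j : ℕ) = (P ⟨(j : ℕ), by have := j.isLt; omega⟩ : ℕ) - s := by
    have qinj : Function.Injective (fun j : Fin t =>
        (⟨(P ⟨(j : ℕ), by have := j.isLt; omega⟩ : ℕ) - s, by
          have h1 := hleft ⟨(j : ℕ), by have := j.isLt; omega⟩ j.isLt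
          have h2 := step2 ⟨(j : ℕ), by have := j.isLt; omega⟩ j.isLt
          omega⟩ : Fin t)) := by
      intro a b h
      simp only [Fin.mk.injEq] at h
      have ha := step2 ⟨(a : ℕ), by have := a.isLt; omega⟩ a.isLt
      have hb := step2 ⟨(b : ℕ), by have := b.isLt; omega⟩ b.isLt
      have he : (⟨(a : ℕ), by have := a.isLt; omega⟩ : Fin (t+1+s)) =
          ⟨(b : ℕ), by have := b.isLt; omega⟩ := hinj _ _ (by omega)
      rw [Fin.ext_iff] at he
      exact Fin.ext (by simpa using he)
    exact ⟨Equiv.ofBijective _ (Finite.injective_iff_bijective.mp qinj), fun j => rfl⟩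
  -- construct r
  obtain ⟨r, hrv⟩ : ∃ r : Perm (Fin s), ∀ j : Fin s,
      (r j : ℕ) = (P ⟨t + 1 + (j : ℕ), by have := j.isLt; omega⟩ : ℕ) := by
    have rinj : Function.Injective (fun j : Fin s =>
        (⟨(P ⟨t + 1 + (j : ℕ), by have := j.isLt; omega⟩ : ℕ), by
          exact step3 ⟨t + 1 + (j : ℕ), by have := j.isLt; omega⟩ (by simp; omega)⟩ : Fin s)) := by
      intro a b h
      simp only [Fin.mk.injEq] at h
      have he : (⟨t + 1 + (a : ℕ), by have := a.isLt; omega⟩ : Fin (t+1+s)) =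
          ⟨t + 1 + (b : ℕ), by have := b.isLt; omega⟩ := hinj _ _ h
      rw [Fin.ext_iff] at he
      exact Fin.ext (by simp at he; omega)
    exact ⟨Equiv.ofBijective _ (Finite.injective_iff_bijective.mp rinj), fun j => rfl⟩
  refine ⟨q, r, ?_⟩
  apply Equiv.ext
  intro j
  apply Fin.ext
  rcases lt_trichotomy ((j : ℕ)) t with hc | hc | hc
  · rw [glue_apply_left _ _ _ hc, hqv ⟨(j : ℕ), hc⟩]
    have h2 := step2 ⟨(j : ℕ), by have := j.isLt; omega⟩ hc
    have he : (⟨(j : ℕ), by have := j.isLt; omega⟩ : Fin (t + 1 + s)) = j := Fin.ext rfl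
    rw [he] at h2 ⊢
    omega
  · have he : j = ⟨t, by omega⟩ := Fin.ext hc
    rw [glue_apply_mid _ _ _ hc, he]
    exact hmax
  · rw [glue_apply_right _ _ _ hc, hrv ⟨(j : ℕ) - (t + 1), by have := j.isLt; omega⟩]
    have he2 : (⟨t + 1 + ((j : ℕ) - (t + 1)), by have := j.isLt; omega⟩ : Fin (t + 1 + s)) = j :=
      Fin.ext (by simp; omega)
    rw [he2]

-- ### transport along finCongr

lemma permCongr_val {m n : ℕ} (h : m = n) (P : Perm (Fin m)) (j : Fin n) :
    (((finCongr h).permCongr P) j : ℕ) = (P ⟨(j : ℕ), h ▸ j.isLt⟩ : ℕ) := by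
  subst h
  simp [Equiv.permCongr_apply, finCongr_apply]

lemma permCongr_cancel {m n : ℕ} (h : m = n) (p : Perm (Fin n)) :
    (finCongr h).permCongr ((finCongr h.symm).permCongr p) = p := by
  subst h
  apply Equiv.ext
  intro j
  simp [Equiv.permCongr_apply, finCongr_apply]

lemma isOcc_permCongr {m n k : ℕ} (h : m = n) (pat : Fin k → ℕ) (P : Perm (Fin m))
    (f : Fin k → Fin m) :
    IsOcc pat ((finCongr h).permCongr P) (fun i => finCongr h (f i)) ↔ IsOcc pat P f := by
  subst h
  simp only [finCongr_refl, Equiv.permCongr_refl, Equiv.refl_apply]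
  rfl

lemma occCnt_permCongr {m n k : ℕ} (h : m = n) (pat : Fin k → ℕ) (P : Perm (Fin m)) :
    occCnt pat ((finCongr h).permCongr P) = occCnt pat P := by
  subst h
  simp only [finCongr_refl, Equiv.permCongr_refl]
  rfl

lemma avoids132_permCongr {m n : ℕ} (h : m = n) (P : Perm (Fin m)) :
    Avoids132 ((finCongr h).permCongr P) ↔ Avoids132 P := by
  subst h
  simp only [finCongr_refl, Equiv.permCongr_refl]
  rfl

-- ### glueN : glue targeted at Fin n

noncomputable def glueN (n t : ℕ) (ht : t < n) (q : Perm (Fin t)) (r : Perm (Fin (n - 1 - t))) :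
    Perm (Fin n) :=
  (finCongr (show t + 1 + (n - 1 - t) = n by omega)).permCongr (glue q r)

lemma glueN_avoids_iff (n t : ℕ) (ht : t < n) (q : Perm (Fin t)) (r : Perm (Fin (n - 1 - t))) :
    Avoids132 (glueN n t ht q r) ↔ Avoids132 q ∧ Avoids132 r := by
  rw [glueN, avoids132_permCongr, avoids132_glue_iff]

lemma glueN_occCnt (n t : ℕ) (ht : t < n) (q : Perm (Fin t)) (r : Perm (Fin (n - 1 - t))) :
    occCnt ![2,1,3] (glueN n t ht q r) =
      occCnt ![2,1,3] q + occCnt ![2,1,3] r + occCnt ![2,1] q := by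
  rw [glueN, occCnt_permCongr, occCnt213_glue]

lemma glueN_val (n t : ℕ) (ht : t < n) (q : Perm (Fin t)) (r : Perm (Fin (n - 1 - t)))
    (j : Fin n) :
    (glueN n t ht q r j : ℕ) = (glue q r ⟨(j : ℕ), by omega⟩ : ℕ) := by
  rw [glueN, permCongr_val]

lemma glueN_max (n t : ℕ) (ht : t < n) (q : Perm (Fin t)) (r : Perm (Fin (n - 1 - t))) :
    (glueN n t ht q r ⟨t, ht⟩ : ℕ) = n - 1 := by
  rw [glueN_val]
  rw [glue_apply_mid _ _ _ rfl]
  omega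

lemma glue_apply_left' {t s : ℕ} (q : Perm (Fin t)) (r : Perm (Fin s)) (j : Fin (t + 1 + s))
    (jj : Fin t) (h : (jj : ℕ) = (j : ℕ)) : (glue q r j : ℕ) = s + q jj := by
  have h2 : (j : ℕ) < t := h ▸ jj.isLt
  rw [glue_apply_left q r j h2]
  have he : (⟨(j : ℕ), h2⟩ : Fin t) = jj := Fin.ext h.symm
  rw [he]

lemma glue_apply_right' {t s : ℕ} (q : Perm (Fin t)) (r : Perm (Fin s)) (j : Fin (t + 1 + s))
    (jj : Fin s) (h : t + 1 + (jj : ℕ) = (j : ℕ)) : (glue q r j : ℕ) = r jj := by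
  have h2 : t < (j : ℕ) := by omega
  rw [glue_apply_right q r j h2]
  have he : (⟨(j : ℕ) - (t + 1), by have := j.isLt; omega⟩ : Fin s) = jj :=
    Fin.ext (by simp; omega)
  rw [he]

lemma glueN_apply_left (n t : ℕ) (ht : t < n) (q : Perm (Fin t)) (r : Perm (Fin (n - 1 - t)))
    (j : Fin n) (jj : Fin t) (h : (jj : ℕ) = (j : ℕ)) :
    (glueN n t ht q r j : ℕ) = (n - 1 - t) + q jj := by
  rw [glueN_val]
  exact glue_apply_left' q r _ jj (by simp [h])

lemma glueN_apply_mid (n t : ℕ) (ht : t < n) (q : Perm (Fin t)) (r : Perm (Fin (n - 1 - t)))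
    (j : Fin n) (h : (j : ℕ) = t) :
    (glueN n t ht q r j : ℕ) = n - 1 := by
  rw [glueN_val]
  rw [glue_apply_mid q r _ (by simp [h])]
  omega

lemma glueN_apply_right (n t : ℕ) (ht : t < n) (q : Perm (Fin t)) (r : Perm (Fin (n - 1 - t)))
    (j : Fin n) (jj : Fin (n - 1 - t)) (h : t + 1 + (jj : ℕ) = (j : ℕ)) :
    (glueN n t ht q r j : ℕ) = r jj := by
  rw [glueN_val]
  exact glue_apply_right' q r _ jj (by simp [h])

lemma glueN_inj (n t : ℕ) (ht : t < n) (q q' : Perm (Fin t)) (r r' : Perm (Fin (n - 1 - t)))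
    (h : glueN n t ht q r = glueN n t ht q' r') : q = q' ∧ r = r' := by
  constructor
  · apply Equiv.ext
    intro j
    apply Fin.ext
    obtain ⟨jn, hjn⟩ : ∃ jn : Fin n, (jn : ℕ) = (j : ℕ) :=
      ⟨⟨(j : ℕ), by have := j.isLt; omega⟩, rfl⟩
    have h1 := glueN_apply_left n t ht q r jn j hjn.symm
    have h2 := glueN_apply_left n t ht q' r' jn j hjn.symm
    have h0 := congrArg (fun σ : Perm (Fin n) => ((σ jn : Fin n) : ℕ)) h
    omega
  · apply Equiv.ext
    intro j
    apply Fin.ext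
    obtain ⟨jn, hjn⟩ : ∃ jn : Fin n, (jn : ℕ) = t + 1 + (j : ℕ) :=
      ⟨⟨t + 1 + (j : ℕ), by have := j.isLt; omega⟩, rfl⟩
    have h1 := glueN_apply_right n t ht q r jn j hjn.symm
    have h2 := glueN_apply_right n t ht q' r' jn j hjn.symm
    have h0 := congrArg (fun σ : Perm (Fin n) => ((σ jn : Fin n) : ℕ)) h
    omega

lemma permCongr_val' {m n : ℕ} (h : m = n) (P : Perm (Fin m)) (j : Fin n) (jj : Fin m)
    (hjj : (jj : ℕ) = (j : ℕ)) : (((finCongr h).permCongr P) j : ℕ) = (P jj : ℕ) := by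
  subst h
  have : jj = j := Fin.ext hjj
  subst this
  simp [Equiv.permCongr_apply, finCongr_apply]

lemma glueN_surj (n t : ℕ) (ht : t < n) (p : Perm (Fin n)) (hA : Avoids132 p)
    (hmax : (p ⟨t, ht⟩ : ℕ) = n - 1) :
    ∃ (q : Perm (Fin t)) (r : Perm (Fin (n - 1 - t))), p = glueN n t ht q r := by
  have h : t + 1 + (n - 1 - t) = n := by omega
  have hPA : Avoids132 ((finCongr h.symm).permCongr p) :=
    (avoids132_permCongr h.symm p).mpr hA
  have hPmax : (((finCongr h.symm).permCongr p) ⟨t, by omega⟩ : ℕ) = (n - 1 - t) + t := by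
    rw [permCongr_val' h.symm p ⟨t, by omega⟩ ⟨t, ht⟩ rfl, hmax]
    omega
  obtain ⟨q, r, hP⟩ := glue_surj ((finCongr h.symm).permCongr p) hPA hPmax
  refine ⟨q, r, ?_⟩
  have h2 : p = (finCongr h).permCongr (glue q r) := by
    rw [← hP]
    exact (permCongr_cancel h p).symm
  exact h2

open scoped Classical in
noncomputable def Aset (n : ℕ) : Finset (Perm (Fin n)) :=
  Finset.univ.filter (fun p => Avoids132 p)

open scoped Classical in
lemma S132_eq_sum (n : ℕ) {k : ℕ} (pat : Fin k → ℕ) :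
    S132 n pat = ∑ p ∈ Aset n, occCnt pat p := rfl

open scoped Classical in
lemma fiber_eq (n t : ℕ) (ht : t < n) (F : Perm (Fin n) → ℕ) :
    ∑ p ∈ (Aset n).filter (fun p => (p ⟨t, ht⟩ : ℕ) = n - 1), F p
      = ∑ x ∈ (Aset t) ×ˢ (Aset (n - 1 - t)), F (glueN n t ht x.1 x.2) := by
  symm
  refine Finset.sum_bij (fun x _ => glueN n t ht x.1 x.2) ?_ ?_ ?_ ?_
  · intro x hx
    rw [Finset.mem_product] at hx
    rw [Finset.mem_filter]
    constructor
    · rw [Aset, Finset.mem_filter]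
      refine ⟨Finset.mem_univ _, ?_⟩
      rw [glueN_avoids_iff]
      exact ⟨(Finset.mem_filter.mp hx.1).2, (Finset.mem_filter.mp hx.2).2⟩
    · exact glueN_apply_mid n t ht x.1 x.2 ⟨t, ht⟩ rfl
  · intro x hx y hy hxy
    have := glueN_inj n t ht x.1 y.1 x.2 y.2 hxy
    exact Prod.ext this.1 this.2
  · intro p hp
    rw [Finset.mem_filter] at hp
    obtain ⟨hpA, hpmax⟩ := hp
    have hA : Avoids132 p := (Finset.mem_filter.mp hpA).2
    obtain ⟨q, r, rfl⟩ := glueN_surj n t ht p hA hpmax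
    have hqr := (glueN_avoids_iff n t ht q r).mp hA
    refine ⟨(q, r), ?_, rfl⟩
    rw [Finset.mem_product]
    exact ⟨Finset.mem_filter.mpr ⟨Finset.mem_univ _, hqr.1⟩,
      Finset.mem_filter.mpr ⟨Finset.mem_univ _, hqr.2⟩⟩
  · intro x hx
    rfl

open scoped Classical in
lemma master (m : ℕ) (F : Perm (Fin (m + 1)) → ℕ) :
    ∑ p ∈ Aset (m + 1), F p =
      ∑ t : Fin (m + 1), ∑ x ∈ (Aset (t : ℕ)) ×ˢ (Aset (m + 1 - 1 - (t : ℕ))),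
        F (glueN (m + 1) (t : ℕ) t.isLt x.1 x.2) := by
  rw [← Finset.sum_fiberwise_of_maps_to
    (g := fun p : Perm (Fin (m + 1)) => p.symm ⟨m, Nat.lt_succ_self m⟩)
    (t := (Finset.univ : Finset (Fin (m + 1)))) (fun p _ => Finset.mem_univ _) F]
  apply Finset.sum_congr rfl
  intro t _
  have hfil : ((Aset (m + 1)).filter (fun p => p.symm ⟨m, Nat.lt_succ_self m⟩ = t))
      = (Aset (m + 1)).filter (fun p => (p ⟨(t : ℕ), t.isLt⟩ : ℕ) = m + 1 - 1) := by
    apply Finset.filter_congr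
    intro p _
    rw [Equiv.symm_apply_eq]
    have he : (⟨(t : ℕ), t.isLt⟩ : Fin (m + 1)) = t := Fin.ext rfl
    rw [he]
    constructor
    · intro h
      rw [← h]
      simp
    · intro h
      apply Fin.ext
      rw [h]
      simp
  rw [hfil]
  exact fiber_eq (m + 1) (t : ℕ) t.isLt F

lemma cardA : ∀ n : ℕ, (Aset n).card = catalan n := by
  intro n
  classical
  induction n using Nat.strong_induction_on with
  | _ n ih =>
    cases n with
    | zero =>
      have h0 : Aset 0 = Finset.univ := by
        rw [Aset]
        apply Finset.filter_true_of_mem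
        intro p _
        rintro ⟨f, -⟩
        exact (f 0).elim0
      rw [h0, catalan_zero, Finset.card_univ]
      simp
    | succ m =>
      have h1 := master m (fun _ => 1)
      simp only [Finset.sum_const, smul_eq_mul, mul_one] at h1
      rw [h1, catalan_succ]
      apply Finset.sum_congr rfl
      intro t _
      rw [Finset.card_product, ih (t : ℕ) (by omega), ih (m + 1 - 1 - (t : ℕ)) (by omega)]
      congr 2 <;> omega

lemma dSeq_zero : dSeq 0 = 0 := by
  rw [dSeq, S132_eq_sum]
  apply Finset.sum_eq_zero
  intro p _
  rw [occCnt]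
  haveI : IsEmpty {f : Fin 2 → Fin 0 // IsOcc ![2,1] p f} := ⟨fun x => (x.1 0).elim0⟩
  exact Nat.card_of_isEmpty

lemma dSeq_one : dSeq 1 = 0 := by
  rw [dSeq, S132_eq_sum]
  apply Finset.sum_eq_zero
  intro p _
  rw [occCnt]
  haveI : IsEmpty {f : Fin 2 → Fin 1 // IsOcc ![2,1] p f} := by
    refine ⟨fun x => ?_⟩
    have h := x.2.1 (show (0 : Fin 2) < 1 by decide)
    have : x.1 0 = x.1 1 := Subsingleton.elim _ _
    rw [this] at h
    exact lt_irrefl _ h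
  exact Nat.card_of_isEmpty

open scoped Classical in
lemma aSeq_succ (m : ℕ) : aSeq (m + 1) =
    ∑ t : Fin (m + 1), (aSeq (t : ℕ) * catalan (m - (t : ℕ)) +
      catalan (t : ℕ) * aSeq (m - (t : ℕ)) + dSeq (t : ℕ) * catalan (m - (t : ℕ))) := by
  rw [aSeq, S132_eq_sum, master m (occCnt ![2,1,3])]
  apply Finset.sum_congr rfl
  intro t _
  rw [Finset.sum_congr rfl (fun x _ => glueN_occCnt (m + 1) (t : ℕ) t.isLt x.1 x.2)]
  rw [Finset.sum_product]
  have hB : ∑ b ∈ Aset (m + 1 - 1 - (t : ℕ)), occCnt ![2,1,3] b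
      = aSeq (m + 1 - 1 - (t : ℕ)) := (S132_eq_sum _ _).symm
  have e1 : ∀ a ∈ Aset (t : ℕ), ∑ b ∈ Aset (m + 1 - 1 - (t : ℕ)),
      (occCnt ![2,1,3] a + occCnt ![2,1,3] b + occCnt ![2,1] a)
      = (occCnt ![2,1,3] a + occCnt ![2,1] a) * (Aset (m + 1 - 1 - (t : ℕ))).card
        + aSeq (m + 1 - 1 - (t : ℕ)) := by
    intro a _
    rw [Finset.sum_add_distrib, Finset.sum_add_distrib, Finset.sum_const, Finset.sum_const, hB]
    simp only [smul_eq_mul]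
    ring
  rw [Finset.sum_congr rfl e1]
  rw [Finset.sum_add_distrib, Finset.sum_const, ← Finset.sum_mul, Finset.sum_add_distrib]
  have hA : ∑ a ∈ Aset (t : ℕ), occCnt ![2,1,3] a = aSeq (t : ℕ) := (S132_eq_sum _ _).symm
  have hD : ∑ a ∈ Aset (t : ℕ), occCnt ![2,1] a = dSeq (t : ℕ) := (S132_eq_sum _ _).symm
  rw [hA, hD, cardA, cardA]
  rw [show m + 1 - 1 - (t : ℕ) = m - (t : ℕ) from by omega]
  simp only [smul_eq_mul]
  ring

theorem stmt_4 : ∀ n : ℕ, 3 ≤ n →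
    aSeq n = (∑ i ∈ Finset.Icc 1 n, aSeq (i - 1) * catalan (n - i)) +
      (∑ i ∈ Finset.Icc 1 n, catalan (i - 1) * aSeq (n - i)) +
      (∑ i ∈ Finset.Icc 3 n, dSeq (i - 1) * catalan (n - i)) := by
  intro n hn
  obtain ⟨m, rfl⟩ : ∃ m, n = m + 1 := ⟨n - 1, by omega⟩
  have key1 : ∑ i ∈ Finset.Icc 1 (m + 1), aSeq (i - 1) * catalan (m + 1 - i)
      = ∑ t ∈ Finset.range (m + 1), aSeq t * catalan (m - t) := by
    rw [← Finset.Ico_add_one_right_eq_Icc, Finset.sum_Ico_eq_sum_range]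
    refine Finset.sum_congr (by norm_num) ?_
    intro t _
    rw [show 1 + t - 1 = t from by omega, show m + 1 - (1 + t) = m - t from by omega]
  have key2 : ∑ i ∈ Finset.Icc 1 (m + 1), catalan (i - 1) * aSeq (m + 1 - i)
      = ∑ t ∈ Finset.range (m + 1), catalan t * aSeq (m - t) := by
    rw [← Finset.Ico_add_one_right_eq_Icc, Finset.sum_Ico_eq_sum_range]
    refine Finset.sum_congr (by norm_num) ?_
    intro t _
    rw [show 1 + t - 1 = t from by omega, show m + 1 - (1 + t) = m - t from by omega]
  have key3 : ∑ i ∈ Finset.Icc 3 (m + 1), dSeq (i - 1) * catalan (m + 1 - i)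
      = ∑ t ∈ Finset.range (m + 1), dSeq t * catalan (m - t) := by
    have hins : Finset.Icc 1 (m + 1) = insert 1 (insert 2 (Finset.Icc 3 (m + 1))) := by
      ext x
      simp only [Finset.mem_Icc, Finset.mem_insert]
      omega
    have h1 : ∑ i ∈ Finset.Icc 1 (m + 1), dSeq (i - 1) * catalan (m + 1 - i)
        = ∑ i ∈ Finset.Icc 3 (m + 1), dSeq (i - 1) * catalan (m + 1 - i) := by
      rw [hins, Finset.sum_insert (by simp [Finset.mem_Icc]),
        Finset.sum_insert (by simp [Finset.mem_Icc])]
      simp [dSeq_zero, dSeq_one]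
    rw [← h1, ← Finset.Ico_add_one_right_eq_Icc, Finset.sum_Ico_eq_sum_range]
    refine Finset.sum_congr (by norm_num) ?_
    intro t _
    rw [show 1 + t - 1 = t from by omega, show m + 1 - (1 + t) = m - t from by omega]
  rw [aSeq_succ m, Fin.sum_univ_eq_sum_range
    (fun k => aSeq k * catalan (m - k) + catalan k * aSeq (m - k) + dSeq k * catalan (m - k))
    (m + 1), key1, key2, key3, Finset.sum_add_distrib, Finset.sum_add_distrib]
end

section
/- The number of 132-avoiding permutations of length n equals the Catalan number binomial(2n,n)/(n+1). -/
/-!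
In a 132-avoiding permutation every entry to the left of the maximum exceeds every entry to its
right, so a 132-avoider with its maximum at position `a` is the skew sum `(p ⊕ 1) ⊖ q` of
132-avoiders of lengths `a` and `n - 1 - a`; conversely every such skew sum avoids 132. Summing over
the position of the maximum gives the Catalan recurrence `C (m + 1) = ∑ C i * C (m - i)`.
-/

open Equiv Equiv.Perm Fin

section Containment

variable {n m k : ℕ}

theorem ContainsPat.trans {π : Fin k → ℕ} {p : Perm (Fin m)} {g : Perm (Fin n)}
    {e : Fin m → Fin n} (hπ : ContainsPat π p) (he : IsOcc (fun x => (p x : ℕ)) g e) :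
    ContainsPat π g := by
  obtain ⟨f, hf, hπf⟩ := hπ
  exact ⟨e ∘ f, he.1.comp hf, fun a b => (hπf a b).trans (he.2 (f a) (f b))⟩

theorem Avoids132.of_isOcc {p : Perm (Fin m)} {g : Perm (Fin n)} {e : Fin m → Fin n}
    (hg : Avoids132 g) (he : IsOcc (fun x => (p x : ℕ)) g e) : Avoids132 p :=
  fun hp => hg (hp.trans he)

theorem avoids132_iff {g : Perm (Fin n)} :
    Avoids132 g ↔ ¬ ∃ i j k, i < j ∧ j < k ∧ g i < g k ∧ g k < g j := by
  refine not_congr ⟨?_, ?_⟩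
  · rintro ⟨f, hf, hval⟩
    exact ⟨f 0, f 1, f 2, hf (by decide), hf (by decide),
      Fin.val_fin_lt.1 ((hval 0 2).1 (by decide)), Fin.val_fin_lt.1 ((hval 2 1).1 (by decide))⟩
  · rintro ⟨i, j, k, hij, hjk, hik, hkj⟩
    refine ⟨![i, j, k], Fin.strictMono_iff_lt_succ.2 ?_, fun a b => ?_⟩
    · intro x
      fin_cases x <;> simpa
    · fin_cases a <;> fin_cases b <;>
        simp [hik, hkj, hik.trans hkj, hik.le, hkj.le, (hik.trans hkj).le]

end Containment

namespace Equiv.Perm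

variable {a b : ℕ}

def directSum (p : Perm (Fin a)) (q : Perm (Fin b)) : Perm (Fin (a + b)) :=
  finSumFinEquiv.permCongr (p.sumCongr q)

/-- The skew sum `p ⊖ q`: `p` on the first `a` positions with the top `a` values, `q` to its lower
right. -/
def skewSum (p : Perm (Fin a)) (q : Perm (Fin b)) : Perm (Fin (a + b)) :=
  (finAddFlip.trans (finCongr (Nat.add_comm b a)) : Perm (Fin (a + b))) * directSum p q

variable (p : Perm (Fin a)) (q : Perm (Fin b))

@[simp]
theorem directSum_castAdd (x : Fin a) : directSum p q (castAdd b x) = castAdd b (p x) := by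
  simp [directSum, permCongr_apply]

@[simp]
theorem directSum_natAdd (y : Fin b) : directSum p q (natAdd a y) = natAdd a (q y) := by
  simp [directSum, permCongr_apply]

@[simp]
theorem val_skewSum_castAdd (x : Fin a) : (skewSum p q (castAdd b x) : ℕ) = b + p x := by
  simp [skewSum, Nat.add_comm]

@[simp]
theorem val_skewSum_natAdd (y : Fin b) : (skewSum p q (natAdd a y) : ℕ) = q y := by
  simp [skewSum]

variable {p q}

theorem directSum_inj {p' : Perm (Fin a)} {q' : Perm (Fin b)} :
    directSum p q = directSum p' q' ↔ p = p' ∧ q = q' := by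
  rw [directSum, directSum, (permCongr finSumFinEquiv).injective.eq_iff]
  exact sumCongrHom_injective.eq_iff.trans Prod.mk_inj

theorem skewSum_inj {p' : Perm (Fin a)} {q' : Perm (Fin b)} :
    skewSum p q = skewSum p' q' ↔ p = p' ∧ q = q' := by
  rw [skewSum, skewSum, mul_right_inj, directSum_inj]

theorem exists_directSum_eq {g : Perm (Fin (a + b))}
    (h : ∀ x : Fin a, ∃ y, g (castAdd b x) = castAdd b y) : ∃ p q, directSum p q = g := by
  obtain ⟨⟨p, q⟩, hpq⟩ := mem_sumCongrHom_range_of_perm_mapsTo_inl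
    (σ := finSumFinEquiv.symm.permCongr g) <| by
      rintro _ ⟨x, rfl⟩
      obtain ⟨y, hy⟩ := h x
      exact ⟨y, by simp [permCongr_apply, hy]⟩
  refine ⟨p, q, ?_⟩
  change finSumFinEquiv.permCongr (sumCongrHom _ _ (p, q)) = g
  rw [hpq]
  ext
  simp [permCongr_apply]

theorem exists_skewSum_eq {g : Perm (Fin (a + b))}
    (h : ∀ x : Fin a, b ≤ (g (castAdd b x) : ℕ)) : ∃ p q, skewSum p q = g := by
  set c : Perm (Fin (a + b)) := finAddFlip.trans (finCongr (Nat.add_comm b a))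
  obtain ⟨p, q, hpq⟩ := exists_directSum_eq (g := c⁻¹ * g) fun x => by
    have hb := h x
    refine ⟨⟨g (castAdd b x) - b, by have := (g (castAdd b x)).isLt; omega⟩, ?_⟩
    rw [Perm.mul_apply, inv_eq_iff_eq]
    ext
    simp only [c, Equiv.trans_apply, finAddFlip_apply_castAdd, finCongr_apply, val_cast,
      val_natAdd]
    omega
  exact ⟨p, q, by rw [skewSum, hpq, mul_inv_cancel_left]⟩

theorem avoids132_skewSum_iff : Avoids132 (skewSum p q) ↔ Avoids132 p ∧ Avoids132 q := by
  refine ⟨fun h => ⟨h.of_isOcc ⟨strictMono_castAdd b, fun x y => by simp⟩,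
    h.of_isOcc ⟨strictMono_natAdd a, fun x y => by simp⟩⟩, ?_⟩
  rintro ⟨hp, hq⟩
  rw [avoids132_iff] at hp hq ⊢
  rintro ⟨i, j, k, hij, hjk, hik, hkj⟩
  -- An occurrence cannot straddle the blocks: its first entry would lie above its last one.
  induction i using Fin.addCases <;> induction j using Fin.addCases <;>
    induction k using Fin.addCases <;>
    simp only [Fin.lt_def, val_skewSum_castAdd, val_skewSum_natAdd, val_castAdd, val_natAdd,
      Nat.add_lt_add_iff_left] at hij hjk hik hkj
  all_goals first
    | omega
    | exact hp ⟨_, _, _, hij, hjk, hik, hkj⟩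
    | exact hq ⟨_, _, _, hij, hjk, hik, hkj⟩

theorem avoids132_directSum_one_iff {m : ℕ} :
    Avoids132 (directSum p (1 : Perm (Fin m))) ↔ Avoids132 p := by
  refine ⟨fun h => h.of_isOcc ⟨strictMono_castAdd m, fun x y => by simp⟩, fun hp => ?_⟩
  rw [avoids132_iff] at hp ⊢
  rintro ⟨i, j, k, hij, hjk, hik, hkj⟩
  induction i using Fin.addCases <;> induction j using Fin.addCases <;>
    induction k using Fin.addCases <;>
    simp only [Fin.lt_def, directSum_castAdd, directSum_natAdd, Perm.one_apply, val_castAdd,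
      val_natAdd, Nat.add_lt_add_iff_left] at hij hjk hik hkj
  all_goals first
    | omega
    | exact hp ⟨_, _, _, hij, hjk, hik, hkj⟩

end Equiv.Perm

theorem Avoids132.lt_of_isTop {n : ℕ} {g : Perm (Fin n)} (hg : Avoids132 g) {i j k : Fin n}
    (hj : IsTop (g j)) (hij : i < j) (hjk : j < k) : g k < g i := by
  have hkj : g k < g j := (hj _).lt_of_ne (g.injective.ne hjk.ne')
  refine (not_lt.1 fun hik => avoids132_iff.1 hg ⟨i, j, k, hij, hjk, hik, hkj⟩).lt_of_ne ?_
  exact g.injective.ne (hij.trans hjk).ne'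

theorem Avoids132.le_val_of_isTop {a b : ℕ} {g : Perm (Fin (a + 1 + b))} (hg : Avoids132 g)
    (htop : IsTop (g (castAdd b (last a)))) (x : Fin (a + 1)) : b ≤ (g (castAdd b x) : ℕ) := by
  have hlt : ∀ y : Fin b, g (natAdd (a + 1) y) < g (castAdd b x) := by
    intro y
    have hy : castAdd b (last a) < natAdd (a + 1) y := Fin.lt_def.2 (by simp only [val_castAdd, val_last, val_natAdd]; omega)
    rcases (le_last x).lt_or_eq with hx | rfl
    · exact hg.lt_of_isTop htop (strictMono_castAdd b hx) hy
    · exact (htop _).lt_of_ne (g.injective.ne hy.ne')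
  let f : Fin b ↪ Fin (a + 1 + b) := ⟨fun y => g (natAdd (a + 1) y), fun y y' h => by simpa using h⟩
  calc b = (Finset.univ.map f).card := by simp
    _ ≤ (Finset.Iio (g (castAdd b x))).card :=
      Finset.card_le_card fun v hv => by
        obtain ⟨y, -, rfl⟩ := Finset.mem_map.1 hv
        exact Finset.mem_Iio.2 (hlt y)
    _ = _ := Fin.card_Iio _

theorem Avoids132.exists_skewSum_directSum_one_eq {a b : ℕ} {g : Perm (Fin (a + 1 + b))}
    (hg : Avoids132 g) (htop : IsTop (g (castAdd b (last a)))) :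
    ∃ p q, Avoids132 p ∧ Avoids132 q ∧ (directSum p (1 : Perm (Fin 1))).skewSum q = g := by
  obtain ⟨r, q, rfl⟩ := exists_skewSum_eq (hg.le_val_of_isTop htop)
  obtain ⟨hr, hq⟩ := avoids132_skewSum_iff.1 hg
  have hlast : r (last a) = last a := by
    have hle := Fin.le_def.1 (htop ⟨a + b, by omega⟩)
    rw [val_skewSum_castAdd] at hle
    exact Fin.ext (by have := (r (last a)).isLt; simp only [val_last] at hle ⊢; omega)
  obtain ⟨p, o, rfl⟩ := exists_directSum_eq (g := r) fun x => by
    have hne : r (castAdd 1 x) ≠ last a := hlast ▸ r.injective.ne (castSucc_lt_last x).ne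
    exact ⟨(r (castAdd 1 x)).castPred hne, (castSucc_castPred _ _).symm⟩
  rw [Subsingleton.elim o 1] at hr ⊢
  exact ⟨p, q, avoids132_directSum_one_iff.1 hr, hq, rfl⟩

theorem isTop_skewSum_directSum_one {a b : ℕ} (p : Perm (Fin a)) (q : Perm (Fin b)) :
    IsTop ((directSum p (1 : Perm (Fin 1))).skewSum q (castAdd b (last a))) := by
  intro y
  rw [Fin.le_def, val_skewSum_castAdd, show last a = natAdd a (0 : Fin 1) from rfl,
    directSum_natAdd, Perm.one_apply, val_natAdd]
  omega

theorem card_avoids132_isTop_castAdd_last (a b : ℕ) :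
    Nat.card {g : Perm (Fin (a + 1 + b)) // Avoids132 g ∧ IsTop (g (castAdd b (last a)))} =
      Nat.card {p : Perm (Fin a) // Avoids132 p} * Nat.card {q : Perm (Fin b) // Avoids132 q} := by
  rw [← Nat.card_prod]
  refine (Nat.card_eq_of_bijective (fun pq => ⟨(directSum pq.1.1 1).skewSum pq.2.1,
    avoids132_skewSum_iff.2 ⟨avoids132_directSum_one_iff.2 pq.1.2, pq.2.2⟩,
    isTop_skewSum_directSum_one _ _⟩) ⟨?_, ?_⟩).symm
  · rintro ⟨⟨p, hp⟩, q, hq⟩ ⟨⟨p', hp'⟩, q', hq'⟩ h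
    simp only [Subtype.mk.injEq, skewSum_inj, directSum_inj] at h
    obtain ⟨⟨rfl, -⟩, rfl⟩ := h
    rfl
  · rintro ⟨g, hg, htop⟩
    obtain ⟨p, q, hp, hq, rfl⟩ := hg.exists_skewSum_directSum_one_eq htop
    exact ⟨(⟨p, hp⟩, ⟨q, hq⟩), rfl⟩

theorem card_avoids132_isTop {n : ℕ} (i : Fin n) :
    Nat.card {g : Perm (Fin n) // Avoids132 g ∧ IsTop (g i)} =
      Nat.card {p : Perm (Fin i) // Avoids132 p} *
        Nat.card {q : Perm (Fin (n - 1 - i)) // Avoids132 q} := by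
  obtain ⟨i, hi⟩ := i
  obtain ⟨b, rfl⟩ : ∃ b, n = i + 1 + b := ⟨n - (i + 1), by omega⟩
  rw [show i + 1 + b - 1 - i = b by omega]
  exact card_avoids132_isTop_castAdd_last i b

theorem card_eq_sum_card_isTop {α : Type*} [Fintype α] [PartialOrder α]
    [OrderTop α] (P : Perm α → Prop) :
    Nat.card {g // P g} = ∑ i, Nat.card {g // P g ∧ IsTop (g i)} := by
  classical
  simp only [Nat.card_eq_fintype_card, Fintype.card_subtype]
  rw [Finset.card_eq_sum_card_fiberwise (f := fun g => g⁻¹ ⊤) (t := Finset.univ)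
    fun _ _ => Finset.mem_univ _]
  refine Finset.sum_congr rfl fun i _ => ?_
  simp only [Finset.filter_filter, isTop_iff_eq_top, inv_eq_iff_eq, eq_comm (a := (⊤ : α))]

theorem stmt_9 (n : ℕ) :
    Nat.card {p : Equiv.Perm (Fin n) // Avoids132 p} = catalan n := by
  induction n using Nat.strong_induction_on with
  | _ n ih =>
    cases n with
    | zero =>
      have h : ∀ p : Perm (Fin 0), Avoids132 p := fun _ ⟨f, _⟩ => (f 0).elim0
      simp [Nat.card_congr (Equiv.subtypeUnivEquiv h)]
    | succ m =>
      rw [card_eq_sum_card_isTop, catalan_succ]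
      refine Finset.sum_congr rfl fun i _ => ?_
      rw [card_avoids132_isTop, Nat.add_sub_cancel, ih i (by omega), ih (m - i) (by omega)]
end

section
/- For every 132-avoiding permutation p of length n and indices i < j, the pair p(i)p(j) is a 12-pattern (i.e. p(i) < p(j)) if and only if the vertex of the binary plane tree T(p) corresponding to position i is a left descendant of the vertex corresponding to position j. -/
/-- Binary plane trees whose vertices carry a label (the position in the
permutation). -/
inductive PTree : Type
  | nil : PTree
  | node (l : PTree) (lab : ℕ) (r : PTree) : PTree

/-- `lab` is a label occurring in the tree. -/
def PTree.Mem : PTree → ℕ → Prop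
  | .nil, _ => False
  | .node l x r, i => x = i ∨ l.Mem i ∨ r.Mem i

/-- The vertex labelled `i` is a left descendant of the vertex labelled `j`,
i.e. lies in the left subtree of the vertex labelled `j`. -/
def PTree.LeftDesc : PTree → ℕ → ℕ → Prop
  | .nil, _, _ => False
  | .node l x r, i, j => (x = j ∧ l.Mem i) ∨ l.LeftDesc i j ∨ r.LeftDesc i j

/-- Build the labelled binary plane tree of a list of (position, value) pairs:
the root is the pair with the maximum value, and the left/right subtrees are
built recursively from the prefix/suffix.  The first argument is fuel. -/
def ptreeOfAux : ℕ → List (ℕ × ℕ) → PTree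
  | 0, _ => .nil
  | _ + 1, [] => .nil
  | fuel + 1, x :: xs =>
      let l := x :: xs
      let i := l.findIdx (fun a => a.2 = l.foldr (fun a b => max a.2 b) 0)
      .node (ptreeOfAux fuel (l.take i)) ((l.getD i (0, 0)).1)
        (ptreeOfAux fuel (l.drop (i + 1)))

/-- The binary plane tree `T(p)` of a permutation `p`, with each vertex labelled
by the corresponding position (0-indexed). -/
def permToPTree {n : ℕ} (p : Equiv.Perm (Fin n)) : PTree :=
  ptreeOfAux n (List.ofFn fun i => ((i : ℕ), (p i : ℕ)))

/-! The root of `T(p)` is the position `r` of the maximum; positions before `r` form the left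
subtree and positions after `r` the right one. For `i < j` there are three cases. If `j = r`,
then `p(i) < p(j)` and `i` lies in the left subtree of `j`. If `i` and `j` lie on opposite sides
of `r` (or `i = r`), then `i` is not a left descendant of `j`, and `p(i) > p(j)`: otherwise
`p(i) p(r) p(j)` would be a `132`. If both lie on the same side, recurse. -/

/-- The largest second coordinate (`0` on `[]`); `ptreeOfAux` roots its tree at the first pair
attaining it. -/
abbrev maxSnd (l : List (ℕ × ℕ)) : ℕ := l.foldr (fun a b => max a.2 b) 0

lemma le_maxSnd {l : List (ℕ × ℕ)} {a : ℕ × ℕ} (ha : a ∈ l) : a.2 ≤ maxSnd l := by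
  induction l with
  | nil => simp at ha
  | cons x xs ih =>
    rcases List.mem_cons.mp ha with rfl | ha
    · exact le_max_left _ _
    · exact (ih ha).trans (le_max_right _ _)

lemma exists_snd_eq_maxSnd {l : List (ℕ × ℕ)} (hl : l ≠ []) : ∃ a ∈ l, a.2 = maxSnd l := by
  induction l with
  | nil => exact absurd rfl hl
  | cons x xs ih =>
    rcases eq_or_ne xs [] with rfl | hxs
    · exact ⟨x, List.mem_cons_self, by simp⟩
    rcases le_total (maxSnd xs) x.2 with h | h
    · exact ⟨x, List.mem_cons_self, (max_eq_left h).symm⟩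
    · obtain ⟨a, ha, he⟩ := ih hxs
      exact ⟨a, List.mem_cons_of_mem _ ha, he.trans (max_eq_right h).symm⟩

lemma ptreeOfAux_succ_eq_node {fuel : ℕ} {l : List (ℕ × ℕ)} (hl : l ≠ []) :
    ∃ A r B, l = A ++ r :: B ∧ (∀ a ∈ l, a.2 ≤ r.2) ∧
      ptreeOfAux (fuel + 1) l = .node (ptreeOfAux fuel A) r.1 (ptreeOfAux fuel B) := by
  obtain ⟨x, xs, rfl⟩ := List.exists_cons_of_ne_nil hl
  set L := x :: xs
  obtain ⟨a, ha, ha_max⟩ := exists_snd_eq_maxSnd hl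
  set idx := L.findIdx (fun a => a.2 = maxSnd L) with hidx
  have hlt : idx < L.length :=
    List.findIdx_lt_length_of_exists ⟨a, ha, by simpa using ha_max⟩
  have hmax : L[idx].2 = maxSnd L := by
    simpa [← hidx] using List.findIdx_getElem (w := hlt)
  refine ⟨L.take idx, L[idx], L.drop (idx + 1), ?_, fun b hb => hmax ▸ le_maxSnd hb, ?_⟩
  · rw [List.getElem_cons_drop, List.take_append_drop]
  · change PTree.node _ (L.getD idx (0, 0)).1 _ = _
    rw [List.getD_eq_getElem L _ hlt]

lemma mem_ptreeOfAux {fuel : ℕ} {l : List (ℕ × ℕ)} (hl : l.length ≤ fuel) (i : ℕ) :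
    (ptreeOfAux fuel l).Mem i ↔ i ∈ l.map Prod.fst := by
  induction fuel generalizing l with
  | zero => simp [List.length_eq_zero_iff.mp (Nat.le_zero.mp hl), ptreeOfAux, PTree.Mem]
  | succ fuel ih =>
    rcases eq_or_ne l [] with rfl | hne
    · simp [ptreeOfAux, PTree.Mem]
    obtain ⟨A, r, B, rfl, -, htree⟩ := ptreeOfAux_succ_eq_node (fuel := fuel) hne
    simp only [List.length_append, List.length_cons] at hl
    rw [htree, PTree.Mem, ih (by omega), ih (by omega)]
    simp only [List.map_append, List.map_cons, List.mem_append, List.mem_cons]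
    tauto

lemma PTree.LeftDesc.mem_left {t : PTree} {i j : ℕ} (h : t.LeftDesc i j) : t.Mem i := by
  induction t with
  | nil => exact h.elim
  | node l x r ihl ihr =>
    rcases h with ⟨-, h⟩ | h | h
    · exact .inr (.inl h)
    · exact .inr (.inl (ihl h))
    · exact .inr (.inr (ihr h))

lemma PTree.LeftDesc.mem_right {t : PTree} {i j : ℕ} (h : t.LeftDesc i j) : t.Mem j := by
  induction t with
  | nil => exact h.elim
  | node l x r ihl ihr =>
    rcases h with ⟨h, -⟩ | h | h
    · exact .inl h
    · exact .inr (.inl (ihl h))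
    · exact .inr (.inr (ihr h))

lemma PTree.leftDesc_node_iff {L R : PTree} {x i j : ℕ} (hL : ∀ k, L.Mem k → k < x)
    (hR : ∀ k, R.Mem k → x < k) :
    (PTree.node L x R).LeftDesc i j ↔
      (x = j ∧ L.Mem i) ∨ (j < x ∧ L.LeftDesc i j) ∨ (x < i ∧ R.LeftDesc i j) := by
  refine or_congr_right (or_congr ?_ ?_)
  · exact ⟨fun h => ⟨hL j h.mem_right, h⟩, And.right⟩
  · exact ⟨fun h => ⟨hR i h.mem_left, h⟩, And.right⟩

/-- `132`-avoidance for a list of (position, value) pairs. -/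
def Avoids132List (l : List (ℕ × ℕ)) : Prop :=
  ∀ a ∈ l, ∀ b ∈ l, ∀ c ∈ l, a.1 < b.1 → b.1 < c.1 → a.2 < c.2 → c.2 < b.2 → False

lemma Avoids132List.mono {l l' : List (ℕ × ℕ)} (h : Avoids132List l) (hl : l' ⊆ l) :
    Avoids132List l' :=
  fun a ha b hb c hc => h a (hl ha) b (hl hb) c (hl hc)

section Node

variable {A B : List (ℕ × ℕ)} {r : ℕ × ℕ} {TA TB : PTree} {i vi j vj : ℕ}

lemma lt_iff_leftDesc_node (hpos : (A ++ r :: B).Pairwise (fun a b => a.1 < b.1))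
    (hval : (A ++ r :: B).Pairwise (fun a b => a.2 ≠ b.2)) (h132 : Avoids132List (A ++ r :: B))
    (hmax : ∀ a ∈ A ++ r :: B, a.2 ≤ r.2)
    (hmemA : ∀ k, TA.Mem k ↔ k ∈ A.map Prod.fst) (hmemB : ∀ k, TB.Mem k ↔ k ∈ B.map Prod.fst)
    (ihA : (i, vi) ∈ A → (j, vj) ∈ A → (vi < vj ↔ TA.LeftDesc i j))
    (ihB : (i, vi) ∈ B → (j, vj) ∈ B → (vi < vj ↔ TB.LeftDesc i j))
    (hi : (i, vi) ∈ A ++ r :: B) (hj : (j, vj) ∈ A ++ r :: B) (hij : i < j) :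
    vi < vj ↔ (PTree.node TA r.1 TB).LeftDesc i j := by
  simp only [List.pairwise_append, List.pairwise_cons, List.mem_cons] at hpos hval
  obtain ⟨-, ⟨hB, -⟩, hposAB⟩ := hpos
  obtain ⟨-, ⟨hvalr, -⟩, hvalAB⟩ := hval
  have hA : ∀ a ∈ A, a.1 < r.1 := fun a ha => hposAB a ha r (.inl rfl)
  have hlt_max : ∀ a ∈ A ++ r :: B, a ≠ r → a.2 < r.2 := by
    intro a ha hne
    refine lt_of_le_of_ne (hmax a ha) ?_
    rcases List.mem_append.mp ha with ha | ha | ⟨_, ha⟩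
    · exact hvalAB a ha r (.inl rfl)
    · exact absurd rfl hne
    · exact (hvalr a ha).symm
  have hTA : ∀ k, TA.Mem k → k < r.1 := by simpa [hmemA] using fun k v hk => hA (k, v) hk
  have hTB : ∀ k, TB.Mem k → r.1 < k := by simpa [hmemB] using fun k v hk => hB (k, v) hk
  rw [PTree.leftDesc_node_iff hTA hTB, hmemA]
  obtain hiA | rfl | hiB : (i, vi) ∈ A ∨ (i, vi) = r ∨ (i, vi) ∈ B := by simpa using hi
  · have := hA _ hiA
    obtain hjA | rfl | hjB : (j, vj) ∈ A ∨ (j, vj) = r ∨ (j, vj) ∈ B := by simpa using hj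
    · have := hA _ hjA
      have := ihA hiA hjA
      grind
    · have := hlt_max _ hi (by grind)
      grind
    · have := hB _ hjB
      have := hlt_max _ hj (by grind)
      have := h132 _ hi r (by simp) _ hj
      grind
  · have := hlt_max _ hj (by grind)
    grind
  · have := hB _ hiB
    grind

end Node

theorem lt_iff_leftDesc_ptreeOfAux {fuel : ℕ} {l : List (ℕ × ℕ)} (hl : l.length ≤ fuel)
    (hpos : l.Pairwise (fun a b => a.1 < b.1)) (hval : l.Pairwise (fun a b => a.2 ≠ b.2))
    (h132 : Avoids132List l) {i vi j vj : ℕ} (hi : (i, vi) ∈ l) (hj : (j, vj) ∈ l)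
    (hij : i < j) : vi < vj ↔ (ptreeOfAux fuel l).LeftDesc i j := by
  induction fuel generalizing l with
  | zero => simp [List.length_eq_zero_iff.mp (Nat.le_zero.mp hl)] at hi
  | succ fuel ih =>
    obtain ⟨A, r, B, rfl, hmax, htree⟩ :=
      ptreeOfAux_succ_eq_node (fuel := fuel) (List.ne_nil_of_mem hi)
    simp only [List.length_append, List.length_cons] at hl
    have hA : A.length ≤ fuel := by omega
    have hB : B.length ≤ fuel := by omega
    rw [htree]
    refine lt_iff_leftDesc_node hpos hval h132 hmax (mem_ptreeOfAux hA) (mem_ptreeOfAux hB)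
      (ih hA (hpos.sublist (List.sublist_append_left _ _))
        (hval.sublist (List.sublist_append_left _ _)) (h132.mono (List.subset_append_left _ _)))
      (ih hB (hpos.sublist (by simp)) (hval.sublist (by simp)) (h132.mono (by simp))) hi hj hij

lemma Avoids132.false_of_lt_lt {n : ℕ} {p : Equiv.Perm (Fin n)} (hp : Avoids132 p) {a b c : Fin n}
    (hab : a < b) (hbc : b < c) (hac : (p a : ℕ) < p c) (hcb : (p c : ℕ) < p b) : False := by
  refine hp ⟨![a, b, c], ?_, ?_⟩
  · rw [Fin.strictMono_iff_lt_succ]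
    intro k
    fin_cases k <;> simpa
  · intro u v
    fin_cases u <;> fin_cases v <;> simp <;> omega

lemma Avoids132.avoids132List_ofFn {n : ℕ} {p : Equiv.Perm (Fin n)} (hp : Avoids132 p) :
    Avoids132List (List.ofFn fun k => ((k : ℕ), (p k : ℕ))) := by
  simp only [Avoids132List, List.mem_ofFn, forall_exists_index, forall_apply_eq_imp_iff]
  exact fun a b c hab hbc hac hcb => hp.false_of_lt_lt hab hbc hac hcb

theorem stmt_16 {n : ℕ} (p : Equiv.Perm (Fin n)) (hp : Avoids132 p)
    (i j : Fin n) (hij : i < j) :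
    (p i : ℕ) < (p j : ℕ) ↔ (permToPTree p).LeftDesc (i : ℕ) (j : ℕ) := by
  refine lt_iff_leftDesc_ptreeOfAux (by simp) ?_ ?_ hp.avoids132List_ofFn
    (List.mem_ofFn.mpr ⟨i, rfl⟩) (List.mem_ofFn.mpr ⟨j, rfl⟩) hij
  · simp [List.pairwise_ofFn]
  · simpa [List.pairwise_ofFn, Fin.val_inj] using fun a b (hab : a < b) => p.injective.ne hab.ne
end
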